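/- arXiv:1407.7216 — 7 statements merged into one kernel-verified Lean document; each statement's English description precedes it below -/
import Mathlib

section
/- For all nonempty subsets Y ⊆ Z ⊆ S of the votes, the inaccuracy is monotone nonincreasing: ina(Z) ≤ ina(Y). -/
open Finset

/-- Number of ones in a binary string. -/
def onesCount {m : ℕ} (x : Fin m → Bool) : ℕ :=
  (Finset.univ.filter fun j => x j = true).card

/-- The maximal Hamming distance from `x` to a vote. -/
def maxDist {n m : ℕ} (s : Fin n → Fin m → Bool) (x : Fin m → Bool) : ℕ :=
  Finset.univ.sup fun i => hammingDist x (s i)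

/-- The string `t(Y)`: the optimal solution overwritten at positions where all
strings of `Y` agree. -/
def tfun {m : ℕ} (sOPT : Fin m → Bool) (Y : Finset (Fin m → Bool)) : Fin m → Bool :=
  fun j =>
    if ∀ y ∈ Y, y j = false then false
    else if ∀ y ∈ Y, y j = true then true
    else sOPT j

/-- The inaccuracy of a subset of votes. -/
def ina {m : ℕ} (sOPT : Fin m → Bool) (Y : Finset (Fin m → Bool)) : ℕ :=
  hammingDist (tfun sOPT Y) sOPT

/-- For all nonempty subsets `Y ⊆ Z ⊆ S` of the votes, the inaccuracy is monotone
nonincreasing: `ina(Z) ≤ ina(Y)`. -/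
theorem ina_antitone {n m k : ℕ} (hkm : k ≤ m) (hn : 0 < n)
    (s : Fin n → Fin m → Bool) (hinj : Function.Injective s)
    (OPT : ℕ) (sOPT : Fin m → Bool)
    (hk : onesCount sOPT = k)
    (hOPT : maxDist s sOPT = OPT)
    (hmin : ∀ x : Fin m → Bool, onesCount x = k → OPT ≤ maxDist s x)
    (Y Z : Finset (Fin m → Bool))
    (hYne : Y.Nonempty) (hYZ : Y ⊆ Z)
    (hZS : Z ⊆ Finset.image s Finset.univ) :
    ina sOPT Z ≤ ina sOPT Y := by
  simp only [ina, hammingDist]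
  apply Finset.card_le_card
  intro j hj
  simp only [Finset.mem_filter, Finset.mem_univ, true_and] at hj ⊢
  obtain ⟨y0, hy0⟩ := hYne
  unfold tfun at hj ⊢
  by_cases h0 : ∀ z ∈ Z, z j = false
  · have h0' : ∀ y ∈ Y, y j = false := fun y hy => h0 y (hYZ hy)
    rw [if_pos h0] at hj
    rw [if_pos h0']
    exact hj
  · by_cases h1 : ∀ z ∈ Z, z j = true
    · have h1' : ∀ y ∈ Y, y j = true := fun y hy => h1 y (hYZ hy)
      have h0' : ¬ ∀ y ∈ Y, y j = false := by
        intro hf; exact absurd (h1' y0 hy0) (by simp [hf y0 hy0])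
      rw [if_neg h0, if_pos h1] at hj
      rw [if_neg h0', if_pos h1']
      exact hj
    · rw [if_neg h0, if_neg h1] at hj
      exact absurd rfl hj
end

section
/- The inaccuracy function is supermodular: for all subsets Y ⊆ Z ⊆ S and every vote s ∈ S, ina(Z) − ina(Z ∪ {s}) ≤ ina(Y) − ina(Y ∪ {s}), where the function is extended to the empty set by ina(∅) = 2·OPT. -/
open Finset

/-- The inaccuracy function extended to the empty set by `ina ∅ = 2·OPT`,
valued in the integers. -/
def inaExt {m : ℕ} (sOPT : Fin m → Bool) (OPT : ℕ) (Y : Finset (Fin m → Bool)) : ℤ :=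
  if Y = ∅ then 2 * OPT else (ina sOPT Y : ℤ)

/-- Positions where all strings of `Y` agree and disagree with `sOPT`. -/
def Dset {m : ℕ} (sOPT : Fin m → Bool) (Y : Finset (Fin m → Bool)) : Finset (Fin m) :=
  Finset.univ.filter fun j => ∀ y ∈ Y, y j = !sOPT j

lemma ina_eq {m : ℕ} (sOPT : Fin m → Bool) (Y : Finset (Fin m → Bool)) (hY : Y.Nonempty) :
    ina sOPT Y = (Dset sOPT Y).card := by
  obtain ⟨y0, hy0⟩ := hY
  unfold ina hammingDist Dset
  congr 1
  ext j
  simp only [Finset.mem_filter, Finset.mem_univ, true_and, tfun]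
  by_cases h0 : ∀ y ∈ Y, y j = false
  · by_cases h1 : ∀ y ∈ Y, y j = true
    · exact absurd (h1 y0 hy0) (by simp [h0 y0 hy0])
    · cases hs : sOPT j <;> simp [h0, h1, hs]
  · by_cases h1 : ∀ y ∈ Y, y j = true
    · cases hs : sOPT j <;> simp [h0, h1, hs]
    · cases hs : sOPT j <;> simp [h0, h1, hs]

lemma Dset_anti {m : ℕ} (sOPT : Fin m → Bool) {Y Z : Finset (Fin m → Bool)}
    (h : Y ⊆ Z) : Dset sOPT Z ⊆ Dset sOPT Y := by
  intro j hj
  simp only [Dset, Finset.mem_filter, Finset.mem_univ, true_and] at hj ⊢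
  exact fun y hy => hj y (h hy)

lemma Dset_union {m : ℕ} (sOPT : Fin m → Bool) (Y : Finset (Fin m → Bool))
    (v : Fin m → Bool) :
    Dset sOPT (Y ∪ {v}) = Dset sOPT Y ∩ Dset sOPT {v} := by
  unfold Dset
  ext j
  simp only [Finset.mem_filter, Finset.mem_univ, true_and, Finset.mem_inter,
    Finset.mem_union, Finset.mem_singleton]
  constructor
  · intro h
    exact ⟨fun y hy => h y (Or.inl hy), fun y hy => h y (Or.inr hy)⟩
  · rintro ⟨h1, h2⟩ y (hy | hy)
    · exact h1 y hy
    · exact h2 y hy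

lemma diff_eq {m : ℕ} (sOPT : Fin m → Bool) (W : Finset (Fin m → Bool))
    (hW : W.Nonempty) (v : Fin m → Bool) :
    (ina sOPT W : ℤ) - ina sOPT (W ∪ {v}) =
      ((Dset sOPT W) \ (Dset sOPT {v})).card := by
  rw [ina_eq sOPT W hW, ina_eq sOPT (W ∪ {v}) (hW.mono Finset.subset_union_left),
    Dset_union]
  rw [← Finset.sdiff_inter_self_left,
    Finset.card_sdiff_of_subset Finset.inter_subset_left]
  rw [Nat.cast_sub (Finset.card_le_card Finset.inter_subset_left)]

/-- The inaccuracy function, extended by `ina ∅ = 2·OPT`, is supermodular: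
for all `Y ⊆ Z ⊆ S` and every vote `v ∈ S`,
`ina(Z) − ina(Z ∪ {v}) ≤ ina(Y) − ina(Y ∪ {v})`. -/
theorem ina_supermodular {n m k : ℕ} (hkm : k ≤ m) (hn : 0 < n)
    (s : Fin n → Fin m → Bool) (hinj : Function.Injective s)
    (OPT : ℕ) (sOPT : Fin m → Bool)
    (hk : onesCount sOPT = k)
    (hOPT : maxDist s sOPT = OPT)
    (hmin : ∀ x : Fin m → Bool, onesCount x = k → OPT ≤ maxDist s x)
    (Y Z : Finset (Fin m → Bool)) (hYZ : Y ⊆ Z)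
    (hZS : Z ⊆ Finset.image s Finset.univ)
    (v : Fin m → Bool) (hv : v ∈ Finset.image s Finset.univ) :
    inaExt sOPT OPT Z - inaExt sOPT OPT (Z ∪ {v}) ≤
      inaExt sOPT OPT Y - inaExt sOPT OPT (Y ∪ {v}) := by
  -- Hamming distance to sOPT of any vote is at most OPT
  have hcard : ∀ x ∈ Finset.image s Finset.univ, (Dset sOPT {x}).card ≤ OPT := by
    intro x hx
    obtain ⟨i, -, rfl⟩ := Finset.mem_image.mp hx
    have heq : (Dset sOPT {s i}).card = hammingDist sOPT (s i) := by
      unfold Dset hammingDist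
      congr 1
      ext j
      simp only [Finset.mem_filter, Finset.mem_univ, true_and, Finset.mem_singleton,
        forall_eq]
      cases h : sOPT j <;> cases h2 : s i j <;> simp [h, h2]
    rw [heq, ← hOPT]
    exact Finset.le_sup (f := fun i => hammingDist sOPT (s i)) (Finset.mem_univ i)
  by_cases hZ : Z = ∅
  · have hY : Y = ∅ := Finset.subset_empty.mp (hZ ▸ hYZ)
    subst hZ; subst hY
    exact le_refl _
  · have hZne : Z.Nonempty := Finset.nonempty_iff_ne_empty.mpr hZ
    have hZuv : Z ∪ {v} ≠ ∅ :=
      ((Finset.singleton_nonempty v).mono Finset.subset_union_right).ne_empty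
    by_cases hY : Y = ∅
    · subst hY
      have hYuv : (∅ : Finset (Fin m → Bool)) ∪ {v} = {v} := by simp
      simp only [inaExt, if_neg hZ, if_neg hZuv, if_true, eq_self_iff_true, if_neg (by simp [hYuv] : (∅ : Finset (Fin m → Bool)) ∪ {v} ≠ ∅)]
      rw [diff_eq sOPT Z hZne v]
      rw [hYuv, ina_eq sOPT {v} (Finset.singleton_nonempty v)]
      have h1 : ((Dset sOPT Z \ Dset sOPT {v}).card : ℤ) ≤ OPT := by
        obtain ⟨z0, hz0⟩ := hZne
        have : Dset sOPT Z \ Dset sOPT {v} ⊆ Dset sOPT {z0} :=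
          (Finset.sdiff_subset).trans (Dset_anti sOPT (Finset.singleton_subset_iff.mpr hz0))
        calc ((Dset sOPT Z \ Dset sOPT {v}).card : ℤ) ≤ (Dset sOPT {z0}).card := by
              exact_mod_cast Finset.card_le_card this
          _ ≤ OPT := by exact_mod_cast hcard z0 (hZS hz0)
      have h2 : ((Dset sOPT {v}).card : ℤ) ≤ OPT := by exact_mod_cast hcard v hv
      linarith
    · have hYne : Y.Nonempty := Finset.nonempty_iff_ne_empty.mpr hY
      have hYuv : Y ∪ {v} ≠ ∅ :=
        ((Finset.singleton_nonempty v).mono Finset.subset_union_right).ne_empty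
      simp only [inaExt, if_neg hZ, if_neg hZuv, if_neg hY, if_neg hYuv]
      rw [diff_eq sOPT Z hZne v, diff_eq sOPT Y hYne v]
      exact_mod_cast Finset.card_le_card
        (Finset.sdiff_subset_sdiff (Dset_anti sOPT hYZ) (le_refl _))
end

section
/- For every nonempty subset Z ⊆ S and every vote s ∈ S, the decrease of inaccuracy from adding s is given exactly by ina(Z) − ina(Z ∪ {s}) = |{ j : s_OPT[j]=1 and s[j]=1 and z[j]=0 for all z ∈ Z }| + |{ j : s_OPT[j]=0 and s[j]=0 and z[j]=1 for all z ∈ Z }|; equivalently, it equals the number of positions j at which s agrees with s_OPT while every element of Z disagrees with s_OPT. -/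
open Finset

lemma ina_eq_card {m : ℕ} (sOPT : Fin m → Bool) (Z : Finset (Fin m → Bool))
    (hZ : Z.Nonempty) :
    ina sOPT Z = (Finset.univ.filter fun j => ∀ z ∈ Z, z j ≠ sOPT j).card := by
  obtain ⟨z0, hz0⟩ := hZ
  unfold ina hammingDist tfun
  congr 1
  ext j
  simp only [mem_filter, mem_univ, true_and]
  by_cases h0 : ∀ y ∈ Z, y j = false <;> by_cases h1 : ∀ y ∈ Z, y j = true <;>
    cases h : sOPT j <;> simp_all

/-- The decrease of inaccuracy from adding a vote `v` to a nonempty `Z ⊆ S`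
equals the number of positions where `s_OPT` and `v` are both `1` while all of
`Z` is `0`, plus the number of positions where `s_OPT` and `v` are both `0`
while all of `Z` is `1`; equivalently, the number of positions at which `v`
agrees with `s_OPT` while every element of `Z` disagrees with `s_OPT`. -/
theorem ina_decrease_eq {n m k : ℕ} (hkm : k ≤ m) (hn : 0 < n)
    (s : Fin n → Fin m → Bool) (hinj : Function.Injective s)
    (OPT : ℕ) (sOPT : Fin m → Bool)
    (hk : onesCount sOPT = k)
    (hOPT : maxDist s sOPT = OPT)
    (hmin : ∀ x : Fin m → Bool, onesCount x = k → OPT ≤ maxDist s x)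
    (Z : Finset (Fin m → Bool)) (hZne : Z.Nonempty)
    (hZS : Z ⊆ Finset.image s Finset.univ)
    (v : Fin m → Bool) (hv : v ∈ Finset.image s Finset.univ) :
    ((ina sOPT Z : ℤ) - ina sOPT (Z ∪ {v})
        = (Finset.univ.filter fun j : Fin m =>
              sOPT j = true ∧ v j = true ∧ ∀ z ∈ Z, z j = false).card
          + (Finset.univ.filter fun j : Fin m =>
              sOPT j = false ∧ v j = false ∧ ∀ z ∈ Z, z j = true).card) ∧
    ((ina sOPT Z : ℤ) - ina sOPT (Z ∪ {v})
        = (Finset.univ.filter fun j : Fin m =>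
              v j = sOPT j ∧ ∀ z ∈ Z, z j ≠ sOPT j).card) := by
  set A := Finset.univ.filter fun j : Fin m => ∀ z ∈ Z, z j ≠ sOPT j with hA
  set B := Finset.univ.filter fun j : Fin m => ∀ z ∈ Z ∪ {v}, z j ≠ sOPT j with hB
  have hBA : B ⊆ A := fun j hj => by
    simp only [hA, hB, mem_filter, mem_univ, true_and] at hj ⊢
    exact fun z hz => hj z (mem_union_left _ hz)
  have hinaZ : ina sOPT Z = A.card := ina_eq_card sOPT Z hZne
  have hinaZ' : ina sOPT (Z ∪ {v}) = B.card :=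
    ina_eq_card sOPT _ (hZne.mono subset_union_left)
  have key : (ina sOPT Z : ℤ) - ina sOPT (Z ∪ {v}) = ((A \ B).card : ℤ) := by
    rw [hinaZ, hinaZ', card_sdiff_of_subset hBA, Nat.cast_sub (card_le_card hBA)]
  have hsd : A \ B = Finset.univ.filter fun j : Fin m =>
      v j = sOPT j ∧ ∀ z ∈ Z, z j ≠ sOPT j := by
    ext j
    simp only [mem_sdiff, hA, hB, mem_filter, mem_univ, true_and, mem_union,
      mem_singleton]
    constructor
    · rintro ⟨hall, hnot⟩
      refine ⟨?_, hall⟩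
      by_contra hvj
      exact hnot (by rintro z (hz | rfl); exacts [hall z hz, hvj])
    · rintro ⟨hvj, hall⟩
      refine ⟨hall, fun hnot => ?_⟩
      exact hnot v (Or.inr rfl) hvj
  have second : (ina sOPT Z : ℤ) - ina sOPT (Z ∪ {v})
      = (Finset.univ.filter fun j : Fin m =>
          v j = sOPT j ∧ ∀ z ∈ Z, z j ≠ sOPT j).card := by
    rw [key, hsd]
  refine ⟨?_, second⟩
  rw [second]
  norm_cast
  rw [← card_union_of_disjoint]
  · congr 1
    ext j
    simp only [mem_filter, mem_univ, true_and, mem_union]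
    cases h : sOPT j <;> cases hvj : v j <;> simp_all
  · rw [disjoint_left]
    intro j h1 h2
    simp only [mem_filter] at h1 h2
    simp [h1.2.1] at h2
end

section
/- For every integer R with 1 ≤ R ≤ n there exists a subset X ⊆ S with |X| = R such that for every vote s ∈ S \ X, ina(X) − ina(X ∪ {s}) ≤ OPT / R; such a set X is called (OPT/R)-stable. -/
open Finset

/-!
Write `I(Y)` for the set of positions at which every string of `Y` differs from `s_OPT`; for
nonempty `Y` we have `ina(Y) = |I(Y)|`, and adding `v` to `Y` lowers the inaccuracy by
`|I(Y) \ I({v})|`. This drop can only grow when `Y` shrinks. So if no `R`-subset of `S` were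
`(OPT/R)`-stable, every subset with at most `R` votes would admit a vote lowering its inaccuracy
by more than `OPT/R`. Starting from a single vote, whose inaccuracy is at most `OPT`, and adding
such a vote `R` times would lower the inaccuracy by more than `OPT`, below zero.
-/

section Stability

variable {α β : Type*} [DecidableEq α] [Fintype β] [DecidableEq β]

lemma card_inf_insert_add_card_sdiff (g : α → Finset β) (Y : Finset α) (v : α) :
    #((insert v Y).inf g) + #(Y.inf g \ g v) = #(Y.inf g) := by
  rw [Finset.inf_insert, Finset.inf_eq_inter, Finset.inter_comm]
  exact Finset.card_inter_add_card_sdiff _ _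

lemma exists_card_eq_forall_mul_card_inf_sdiff_le (S : Finset α) (g : α → Finset β) {c : ℕ}
    (hc : ∀ y ∈ S, #(g y) ≤ c) {R : ℕ} (hR1 : 1 ≤ R) (hRS : R ≤ #S) :
    ∃ X ⊆ S, #X = R ∧ ∀ v ∈ S \ X, R * #(X.inf g \ g v) ≤ c := by
  by_contra! hunstable
  have extend : ∀ Y ⊆ S, #Y ≤ R → ∃ v ∈ S \ Y, c + 1 ≤ R * #(Y.inf g \ g v) := by
    intro Y hYS hYR
    obtain ⟨X, hYX, hXS, hXR⟩ := Finset.exists_subsuperset_card_eq hYS hYR hRS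
    obtain ⟨v, hv, hdrop⟩ := hunstable X hXS hXR
    refine ⟨v, Finset.sdiff_subset_sdiff le_rfl hYX hv, hdrop.trans_le ?_⟩
    gcongr
  have descend : ∀ r ≤ R, ∃ Y ⊆ S, #Y = r + 1 ∧ R * #(Y.inf g) + r * (c + 1) ≤ R * c := by
    intro r
    induction r with
    | zero =>
      intro _
      obtain ⟨y, hy⟩ := Finset.card_pos.mp (hR1.trans hRS)
      refine ⟨{y}, Finset.singleton_subset_iff.mpr hy, Finset.card_singleton y, ?_⟩
      simpa using Nat.mul_le_mul_left R (hc y hy)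
    | succ r ih =>
      intro hrR
      obtain ⟨Y, hYS, hYr, hY⟩ := ih (Nat.le_of_succ_le hrR)
      obtain ⟨v, hv, hdrop⟩ := extend Y hYS (by omega)
      obtain ⟨hvS, hvY⟩ := Finset.mem_sdiff.mp hv
      refine ⟨insert v Y, Finset.insert_subset hvS hYS,
        by rw [Finset.card_insert_of_notMem hvY, hYr], ?_⟩
      have hsplit := congrArg (R * ·) (card_inf_insert_add_card_sdiff g Y v)
      simp only [Nat.mul_add] at hsplit
      rw [Nat.succ_mul]
      linarith
  obtain ⟨Y, -, -, hY⟩ := descend R le_rfl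
  have : R * (c + 1) ≤ R * c := le_of_add_le_right hY
  rw [Nat.mul_succ] at this
  omega

end Stability

def disagreement {m : ℕ} (x y : Fin m → Bool) : Finset (Fin m) :=
  {j | x j ≠ y j}

lemma tfun_ne_iff {m : ℕ} (sOPT : Fin m → Bool) {Y : Finset (Fin m → Bool)} (hY : Y.Nonempty)
    (j : Fin m) : tfun sOPT Y j ≠ sOPT j ↔ ∀ y ∈ Y, y j ≠ sOPT j := by
  obtain ⟨y₀, hy₀⟩ := hY
  unfold tfun
  cases h : sOPT j <;> split_ifs with hf ht <;> grind

lemma ina_eq_card_inf {m : ℕ} (sOPT : Fin m → Bool) {Y : Finset (Fin m → Bool)}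
    (hY : Y.Nonempty) : ina sOPT Y = #(Y.inf (disagreement · sOPT)) := by
  unfold ina hammingDist
  congr 1
  ext j
  simp [Finset.mem_inf, disagreement, tfun_ne_iff sOPT hY]

theorem exists_stable_subset_general {n m : ℕ}
    (s : Fin n → Fin m → Bool) (hinj : Function.Injective s)
    (OPT : ℕ) (sOPT : Fin m → Bool)
    (hOPT : maxDist s sOPT = OPT)
    (R : ℕ) (hR1 : 1 ≤ R) (hRn : R ≤ n) :
    ∃ X : Finset (Fin m → Bool), X ⊆ Finset.image s Finset.univ ∧ X.card = R ∧
      ∀ v ∈ Finset.image s Finset.univ \ X,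
        (ina sOPT X : ℝ) - ina sOPT (X ∪ {v}) ≤ (OPT : ℝ) / R := by
  have hS : #(Finset.image s Finset.univ) = n := by
    simp [Finset.card_image_of_injective _ hinj]
  have hdist : ∀ y ∈ Finset.image s Finset.univ, #(disagreement y sOPT) ≤ OPT := by
    rintro _ hy
    obtain ⟨i, -, rfl⟩ := Finset.mem_image.mp hy
    change hammingDist (s i) sOPT ≤ OPT
    rw [← hOPT, hammingDist_comm]
    exact Finset.le_sup (f := fun i => hammingDist sOPT (s i)) (Finset.mem_univ i)
  obtain ⟨X, hXS, hXR, hstable⟩ :=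
    exists_card_eq_forall_mul_card_inf_sdiff_le _ _ hdist hR1 (hRn.trans hS.ge)
  refine ⟨X, hXS, hXR, fun v hv => ?_⟩
  have hX : X.Nonempty := Finset.card_pos.mp (hXR ▸ hR1)
  have hdrop : (ina sOPT X : ℝ) - ina sOPT (X ∪ {v})
      = #(X.inf (disagreement · sOPT) \ disagreement v sOPT) := by
    rw [Finset.union_singleton, ina_eq_card_inf sOPT hX,
      ina_eq_card_inf sOPT (Finset.insert_nonempty v X), ← card_inf_insert_add_card_sdiff _ X v]
    push_cast
    ring
  rw [hdrop, le_div_iff₀ (by positivity), mul_comm]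
  exact_mod_cast hstable v hv

/-- For every integer `R` with `1 ≤ R ≤ n` there exists a subset `X ⊆ S` with
`|X| = R` such that for every vote `v ∈ S \ X`,
`ina(X) − ina(X ∪ {v}) ≤ OPT / R`, i.e. `X` is `(OPT/R)`-stable. -/
theorem exists_stable_subset {n m k : ℕ} (hkm : k ≤ m) (hn : 0 < n)
    (s : Fin n → Fin m → Bool) (hinj : Function.Injective s)
    (OPT : ℕ) (sOPT : Fin m → Bool)
    (hk : onesCount sOPT = k)
    (hOPT : maxDist s sOPT = OPT)
    (hmin : ∀ x : Fin m → Bool, onesCount x = k → OPT ≤ maxDist s x)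
    (R : ℕ) (hR1 : 1 ≤ R) (hRn : R ≤ n) :
    ∃ X : Finset (Fin m → Bool), X ⊆ Finset.image s Finset.univ ∧ X.card = R ∧
      ∀ v ∈ Finset.image s Finset.univ \ X,
        (ina sOPT X : ℝ) - ina sOPT (X ∪ {v}) ≤ (OPT : ℝ) / R :=
  exists_stable_subset_general s hinj OPT sOPT hOPT R hR1 hRn
end

section
/- For every nonempty subset Y ⊆ S, the number of star positions of its pattern is at most |Y|·OPT, i.e., p^{(*)}(Y) ≤ |Y| · OPT. -/
open Finset

/-- The number of star positions of the pattern `p(Y)`: positions at which the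
strings of `Y` do not all agree. -/
def starCount {m : ℕ} (Y : Finset (Fin m → Bool)) : ℕ :=
  (Finset.univ.filter fun j : Fin m =>
    ¬ (∀ y ∈ Y, y j = false) ∧ ¬ (∀ y ∈ Y, y j = true)).card

/-- For every nonempty subset `Y ⊆ S`, the number of star positions of its
pattern is at most `|Y| · OPT`. -/
theorem starCount_le {n m k : ℕ} (hkm : k ≤ m) (hn : 0 < n)
    (s : Fin n → Fin m → Bool) (hinj : Function.Injective s)
    (OPT : ℕ) (sOPT : Fin m → Bool)
    (hk : onesCount sOPT = k)
    (hOPT : maxDist s sOPT = OPT)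
    (hmin : ∀ x : Fin m → Bool, onesCount x = k → OPT ≤ maxDist s x)
    (Y : Finset (Fin m → Bool)) (hYne : Y.Nonempty)
    (hYS : Y ⊆ Finset.image s Finset.univ) :
    starCount Y ≤ Y.card * OPT := by
  have hsub : (Finset.univ.filter fun j : Fin m =>
      ¬ (∀ y ∈ Y, y j = false) ∧ ¬ (∀ y ∈ Y, y j = true)) ⊆
      Y.biUnion fun y => Finset.univ.filter fun j => y j ≠ sOPT j := by
    intro j hj
    simp only [mem_filter, mem_univ, true_and] at hj
    obtain ⟨h0, h1⟩ := hj
    push_neg at h0 h1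
    obtain ⟨y1, hy1, hy1'⟩ := h0
    obtain ⟨y0, hy0, hy0'⟩ := h1
    simp only [mem_biUnion, mem_filter, mem_univ, true_and]
    cases hs : sOPT j
    · exact ⟨y1, hy1, by simp [hs]; simpa using hy1'⟩
    · exact ⟨y0, hy0, by simp [hs]; simpa using hy0'⟩
  calc starCount Y ≤ (Y.biUnion fun y => Finset.univ.filter fun j => y j ≠ sOPT j).card :=
        Finset.card_le_card hsub
    _ ≤ ∑ y ∈ Y, (Finset.univ.filter fun j => y j ≠ sOPT j).card :=
        Finset.card_biUnion_le
    _ ≤ ∑ _y ∈ Y, OPT := by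
        refine Finset.sum_le_sum fun y hy => ?_
        obtain ⟨i, _, rfl⟩ := Finset.mem_image.mp (hYS hy)
        have : (Finset.univ.filter fun j => s i j ≠ sOPT j).card
            = hammingDist sOPT (s i) := by
          rw [hammingDist]
          congr 1
          ext j
          simp [ne_comm]
        rw [this, ← hOPT, maxDist]
        exact Finset.le_sup (f := fun i => hammingDist sOPT (s i)) (Finset.mem_univ i)
    _ = Y.card * OPT := by rw [Finset.sum_const, smul_eq_mul]
end

section
/- Let X ⊆ S be nonempty and ε₁ ≥ 0 be such that ina(X) − ina(X ∪ {s}) ≤ ε₁·OPT for every s ∈ S \ X. Let B = { j : p(X)[j] = * } be the set of star positions, let k'' = |{ j ∉ B : s_OPT[j] = 1 }|, and let c = |{ j ∉ B : p(X)[j] = 1 }|. Suppose z assigns a value in {0,1} to every position j ∉ B with |{ j ∉ B : z[j] = 1 }| = k'' and |{ j ∉ B : z[j] ≠ p(X)[j] }| = |k'' − c| (i.e., z is a k''-completion of the no-star part of p(X)). Then for every vote s_i ∈ S, Σ_{j ∈ B} |s_OPT[j] − s_i[j]| + Σ_{j ∉ B} |z[j] − s_i[j]| ≤ (1 + 2ε₁)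 · OPT. -/
open Finset

/-- The set of star positions of the pattern `p(Y)`: positions at which the
strings of `Y` do not all agree. -/
def starSet {m : ℕ} (Y : Finset (Fin m → Bool)) : Finset (Fin m) :=
  Finset.univ.filter fun j : Fin m =>
    ¬ (∀ y ∈ Y, y j = false) ∧ ¬ (∀ y ∈ Y, y j = true)

/-- The value of the pattern `p(Y)` at a no-star position: `true` iff all
strings of `Y` are `1` there. -/
def pOne {m : ℕ} (Y : Finset (Fin m → Bool)) (j : Fin m) : Bool :=
  decide (∀ y ∈ Y, y j = true)

/-- If `X ⊆ S` is `(ε₁·OPT)`-stable and `z` is a `k''`-completion of the no-star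
part of `p(X)`, where `k''` is the number of ones of `s_OPT` on no-star
positions, then for every vote `s_i`,
`Σ_{j ∈ B} |s_OPT[j] − s_i[j]| + Σ_{j ∉ B} |z[j] − s_i[j]| ≤ (1 + 2ε₁)·OPT`. -/
theorem kcompletion_close {n m k : ℕ} (hkm : k ≤ m) (hn : 0 < n)
    (s : Fin n → Fin m → Bool) (hinj : Function.Injective s)
    (OPT : ℕ) (sOPT : Fin m → Bool)
    (hk : onesCount sOPT = k)
    (hOPT : maxDist s sOPT = OPT)
    (hmin : ∀ x : Fin m → Bool, onesCount x = k → OPT ≤ maxDist s x)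
    (X : Finset (Fin m → Bool)) (hXne : X.Nonempty)
    (hXS : X ⊆ Finset.image s Finset.univ)
    (ε₁ : ℝ) (hε₁ : 0 ≤ ε₁)
    (hstab : ∀ v ∈ Finset.image s Finset.univ \ X,
      (ina sOPT X : ℝ) - ina sOPT (X ∪ {v}) ≤ ε₁ * OPT)
    (k'' : ℕ) (hk'' : k'' = (((starSet X)ᶜ).filter fun j => sOPT j = true).card)
    (c : ℕ) (hc : c = (((starSet X)ᶜ).filter fun j => pOne X j = true).card)
    (z : Fin m → Bool)
    (hz1 : (((starSet X)ᶜ).filter fun j => z j = true).card = k'')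
    (hz2 : (((starSet X)ᶜ).filter fun j => z j ≠ pOne X j).card
      = ((k'' : ℤ) - (c : ℤ)).natAbs) :
    ∀ i : Fin n,
      ((∑ j ∈ starSet X, if sOPT j = s i j then (0 : ℝ) else 1)
        + ∑ j ∈ (starSet X)ᶜ, if z j = s i j then (0 : ℝ) else 1)
        ≤ (1 + 2 * ε₁) * OPT := by
  classical
  intro i
  obtain ⟨y0, hy0⟩ := hXne
  set B := starSet X with hBdef
  -- characterize membership in Bᶜ
  have hBc : ∀ j : Fin m, j ∈ Bᶜ ↔ ((∀ y ∈ X, y j = false) ∨ (∀ y ∈ X, y j = true)) := by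
    intro j
    simp only [hBdef, starSet, Finset.mem_compl, Finset.mem_filter, Finset.mem_univ, true_and,
      not_and, not_not]
    constructor
    · intro h
      by_cases h0 : ∀ y ∈ X, y j = false
      · exact Or.inl h0
      · exact Or.inr (h h0)
    · rintro (h | h)
      · intro h'; exact absurd h h'
      · intro _; exact h
  have hB : ∀ j : Fin m, j ∈ B → (¬ (∀ y ∈ X, y j = false)) ∧ ¬ (∀ y ∈ X, y j = true) := by
    intro j hj
    simpa [hBdef, starSet] using hj
  have hpOne_false : ∀ j : Fin m, (∀ y ∈ X, y j = false) → pOne X j = false := by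
    intro j h
    simp only [pOne, decide_eq_false_iff_not]
    intro h'; exact absurd (h y0 hy0) (by simp [h' y0 hy0])
  have hpOne_true : ∀ j : Fin m, (∀ y ∈ X, y j = true) → pOne X j = true := by
    intro j h; simp only [pOne, decide_eq_true_eq]; exact h
  -- tfun on no-star positions is pOne, on star positions is sOPT
  have htf : ∀ j : Fin m, j ∈ Bᶜ → tfun sOPT X j = pOne X j := by
    intro j hj
    rcases (hBc j).1 hj with h | h
    · simp only [tfun]
      rw [if_pos h, hpOne_false j h]
    · have haf : ¬ ∀ y ∈ X, y j = false := by
        intro h'; exact absurd (h y0 hy0) (by simp [h' y0 hy0])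
      simp only [tfun]
      rw [if_neg haf, if_pos h, hpOne_true j h]
  have htfB : ∀ j : Fin m, j ∈ B → tfun sOPT X j = sOPT j := by
    intro j hj
    obtain ⟨h1, h2⟩ := hB j hj
    simp only [tfun]
    rw [if_neg h1, if_neg h2]
  -- D : disagreement positions between pattern and sOPT
  set D : Finset (Fin m) := Bᶜ.filter (fun j => pOne X j ≠ sOPT j) with hDdef
  have hamc : ∀ x y : Fin m → Bool, hammingDist x y
      = (Finset.univ.filter fun j => ¬ (x j = y j)).card := fun x y => rfl
  have hfe : (Finset.univ.filter fun j => ¬ (tfun sOPT X j = sOPT j)) = D := by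
    ext j
    simp only [hDdef, Finset.mem_filter, Finset.mem_univ, true_and]
    by_cases hj : j ∈ Bᶜ
    · rw [htf j hj]
      exact ⟨fun h => ⟨hj, h⟩, fun h => h.2⟩
    · have hjB : j ∈ B := by simpa using hj
      rw [htfB j hjB]
      simp [hj]
  have ina_eq : ina sOPT X = D.card := by
    unfold ina
    rw [hamc, hfe]
  -- E : positions of D where s i agrees with sOPT
  set E : Finset (Fin m) := D.filter (fun j => s i j = sOPT j) with hEdef
  -- stability bound : (E.card : ℝ) ≤ ε₁ * OPT
  have Ebound : (E.card : ℝ) ≤ ε₁ * OPT := by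
    by_cases hiX : s i ∈ X
    · -- E is empty
      have : E = ∅ := by
        rw [Finset.eq_empty_iff_forall_notMem]
        intro j hj
        simp only [hEdef, hDdef, Finset.mem_filter] at hj
        obtain ⟨⟨hjc, hne⟩, heq⟩ := hj
        rcases (hBc j).1 hjc with h | h
        · rw [hpOne_false j h, h (s i) hiX] at *
          exact hne (by rw [← heq])
        · rw [hpOne_true j h, h (s i) hiX] at *
          exact hne (by rw [← heq])
      rw [this]
      simpa using mul_nonneg hε₁ (Nat.cast_nonneg OPT)
    · set v := s i with hv
      have hvmem : v ∈ Finset.image s Finset.univ \ X := by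
        simp only [Finset.mem_sdiff, Finset.mem_image]
        exact ⟨⟨i, Finset.mem_univ i, rfl⟩, hiX⟩
      have hstab' := hstab v hvmem
      -- ina (X ∪ {v}) ≤ (D \ E).card
      have hsub : (Finset.univ.filter fun j => tfun sOPT (X ∪ {v}) j ≠ sOPT j)
          ⊆ D.filter (fun j => ¬ (s i j = sOPT j)) := by
        intro j hj
        simp only [Finset.mem_filter, Finset.mem_univ, true_and] at hj
        by_cases h0 : ∀ y ∈ X ∪ {v}, y j = false
        · have h0X : ∀ y ∈ X, y j = false := fun y hy => h0 y (Finset.mem_union_left _ hy)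
          have hvj : v j = false := h0 v (Finset.mem_union_right _ (Finset.mem_singleton_self v))
          have htv : tfun sOPT (X ∪ {v}) j = false := by
            simp only [tfun]; rw [if_pos h0]
          rw [htv] at hj
          simp only [hDdef, Finset.mem_filter]
          refine ⟨⟨(hBc j).2 (Or.inl h0X), ?_⟩, ?_⟩
          · rw [hpOne_false j h0X]; exact hj
          · intro h; apply hj; rw [← h]; exact hvj.symm
        · by_cases h1 : ∀ y ∈ X ∪ {v}, y j = true
          · have h1X : ∀ y ∈ X, y j = true := fun y hy => h1 y (Finset.mem_union_left _ hy)
            have hvj : v j = true := h1 v (Finset.mem_union_right _ (Finset.mem_singleton_self v))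
            have htv : tfun sOPT (X ∪ {v}) j = true := by
              simp only [tfun]; rw [if_neg h0, if_pos h1]
            rw [htv] at hj
            simp only [hDdef, Finset.mem_filter]
            refine ⟨⟨(hBc j).2 (Or.inr h1X), ?_⟩, ?_⟩
            · rw [hpOne_true j h1X]; exact hj
            · intro h; apply hj; rw [← h]; exact hvj.symm
          · have : tfun sOPT (X ∪ {v}) j = sOPT j := by
              simp only [tfun]; rw [if_neg h0, if_neg h1]
            exact absurd this hj
      have hcard2 : ina sOPT (X ∪ {v}) ≤ (D.filter (fun j => ¬ (s i j = sOPT j))).card := by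
        unfold ina
        rw [hamc]
        exact Finset.card_le_card hsub
      have hsplit : (D.filter (fun j => ¬ (s i j = sOPT j))).card + E.card = D.card := by
        rw [hEdef, add_comm]
        exact Finset.card_filter_add_card_filter_not _
      have hnat : ina sOPT (X ∪ {v}) + E.card ≤ ina sOPT X := by
        rw [ina_eq]; omega
      have : (E.card : ℝ) ≤ (ina sOPT X : ℝ) - ina sOPT (X ∪ {v}) := by
        have := hnat
        push_cast
        have h' : ((ina sOPT (X ∪ {v}) + E.card : ℕ) : ℝ) ≤ (ina sOPT X : ℝ) :=
          Nat.cast_le.2 hnat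
        push_cast at h'
        linarith
      linarith
  -- convert the sums to cardinalities
  have hsum : ∀ (A : Finset (Fin m)) (f g : Fin m → Bool),
      (∑ j ∈ A, if f j = g j then (0 : ℝ) else 1)
        = ((A.filter fun j => ¬ (f j = g j)).card : ℝ) := by
    intro A f g
    rw [Finset.sum_ite]
    simp
  -- counting: pointwise identities over Bᶜ
  -- t1 : triangle inequality
  have t1 : (Bᶜ.filter fun j => ¬ (z j = s i j)).card
      ≤ (Bᶜ.filter fun j => z j ≠ pOne X j).card
        + (Bᶜ.filter fun j => ¬ (pOne X j = s i j)).card := by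
    refine le_trans (Finset.card_le_card ?_) (Finset.card_union_le _ _)
    intro j hj
    simp only [Finset.mem_filter, Finset.mem_union] at *
    obtain ⟨hjc, hne⟩ := hj
    by_cases h : z j = pOne X j
    · exact Or.inr ⟨hjc, fun h' => hne (h.trans h')⟩
    · exact Or.inl ⟨hjc, h⟩
  -- |k'' - c| ≤ D.card
  have t2 : (Bᶜ.filter fun j => z j ≠ pOne X j).card ≤ D.card := by
    rw [hz2]
    -- split counts
    have ha : k'' + (Bᶜ.filter fun j => pOne X j = true ∧ sOPT j = false).card
        = c + (Bᶜ.filter fun j => pOne X j = false ∧ sOPT j = true).card := by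
      rw [hk'', hc]
      simp only [Finset.card_filter]
      rw [← Finset.sum_add_distrib, ← Finset.sum_add_distrib]
      refine Finset.sum_congr rfl fun j _ => ?_
      cases h1 : pOne X j <;> cases h2 : sOPT j <;> simp
    have hd : D.card = (Bᶜ.filter fun j => pOne X j = true ∧ sOPT j = false).card
        + (Bᶜ.filter fun j => pOne X j = false ∧ sOPT j = true).card := by
      simp only [hDdef, Finset.card_filter]
      rw [← Finset.sum_add_distrib]
      refine Finset.sum_congr rfl fun j _ => ?_
      cases h1 : pOne X j <;> cases h2 : sOPT j <;> simp
    omega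
  -- t3 : pointwise identity
  have t3 : (Bᶜ.filter fun j => ¬ (pOne X j = s i j)).card + D.card
      = (Bᶜ.filter fun j => ¬ (sOPT j = s i j)).card + 2 * E.card := by
    have hE' : E = Bᶜ.filter (fun j => pOne X j ≠ sOPT j ∧ s i j = sOPT j) := by
      rw [hEdef, hDdef, Finset.filter_filter]
    rw [hE', hDdef]
    simp only [Finset.card_filter]
    rw [← Finset.sum_add_distrib, Finset.mul_sum, ← Finset.sum_add_distrib]
    refine Finset.sum_congr rfl fun j _ => ?_
    cases h1 : pOne X j <;> cases h2 : sOPT j <;> cases h3 : s i j <;> simp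
  -- hamming distance split
  have hham : (B.filter fun j => ¬ (sOPT j = s i j)).card
      + (Bᶜ.filter fun j => ¬ (sOPT j = s i j)).card = hammingDist sOPT (s i) := by
    rw [hamc]
    rw [← Finset.card_union_of_disjoint
      (Finset.disjoint_filter_filter disjoint_compl_right),
      ← Finset.filter_union, Finset.union_compl]
  have hhle : hammingDist sOPT (s i) ≤ OPT := by
    rw [← hOPT]
    exact Finset.le_sup (f := fun i => hammingDist sOPT (s i)) (Finset.mem_univ i)
  -- combine in ℕ
  have key : (B.filter fun j => ¬ (sOPT j = s i j)).card
      + (Bᶜ.filter fun j => ¬ (z j = s i j)).card ≤ OPT + 2 * E.card := by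
    omega
  -- finish in ℝ
  rw [hsum B sOPT (s i), hsum Bᶜ z (s i)]
  have keyR : ((B.filter fun j => ¬ (sOPT j = s i j)).card : ℝ)
      + ((Bᶜ.filter fun j => ¬ (z j = s i j)).card : ℝ) ≤ (OPT : ℝ) + 2 * E.card := by
    have := (Nat.cast_le (α := ℝ)).2 key
    push_cast at this
    linarith
  linarith
end

section
/- For every integer R with 1 ≤ R ≤ n there exist a subset X ⊆ S with |X| = R and a string x ∈ {0,1}^m with x^{(1)} = k such that, writing B = { j : p(X)[j] = * }, k'' = |{ j ∉ B : x[j] = 1 }|, and c = |{ j ∉ B : p(X)[j] = 1 }|, the string x satisfies |{ j ∉ B : x[j] ≠ p(X)[j] }| = |k'' − c| (its no-star part is a k''-completion of the no-star part of p(X)) and max_{1≤i≤n} d(x, s_i) ≤ (1 + 2/R) · OPT. -/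
open Finset

/-! ### Auxiliary lemmas -/

lemma agree_of_notMem_starSet {m : ℕ} {X : Finset (Fin m → Bool)} {j : Fin m}
    (hj : j ∉ starSet X) {y z : Fin m → Bool} (hy : y ∈ X) (hz : z ∈ X) :
    y j = z j := by
  simp only [starSet, mem_filter, mem_univ, true_and, not_and, not_not] at hj
  by_cases h0 : ∀ w ∈ X, w j = false
  · rw [h0 y hy, h0 z hz]
  · have h1 := hj h0
    rw [h1 y hy, h1 z hz]

lemma pOne_eq_on {m : ℕ} {X : Finset (Fin m → Bool)} {j : Fin m}
    (hj : j ∉ starSet X) {y : Fin m → Bool} (hy : y ∈ X) : pOne X j = y j := by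
  simp only [starSet, mem_filter, mem_univ, true_and, not_and, not_not] at hj
  by_cases h1 : ∀ z ∈ X, z j = true
  · rw [h1 y hy]
    simp only [pOne, decide_eq_true_eq]
    exact h1
  · have h0 : ∀ z ∈ X, z j = false := by
      by_contra h0
      exact h1 (hj h0)
    rw [h0 y hy]
    simp only [pOne, decide_eq_false_iff_not]
    exact h1

lemma starSet_mono {m : ℕ} {X X' : Finset (Fin m → Bool)} (h : X ⊆ X') :
    starSet X ⊆ starSet X' := by
  intro j hj
  simp only [starSet, mem_filter, mem_univ, true_and] at *
  exact ⟨fun hall => hj.1 fun y hy => hall y (h hy),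
    fun hall => hj.2 fun y hy => hall y (h hy)⟩

lemma card_filter_split {ι : Type*} [Fintype ι] [DecidableEq ι] (B : Finset ι)
    (p : ι → Prop) [DecidablePred p] :
    (univ.filter p).card = (B.filter p).card + (Bᶜ.filter p).card := by
  rw [← card_union_of_disjoint (disjoint_filter_filter disjoint_compl_right),
    ← filter_union, union_compl]

lemma card_filter_le_add {ι : Type*} [DecidableEq ι] (C : Finset ι) (u v : ι → Bool) :
    (C.filter fun j => u j = true).card ≤
      (C.filter fun j => v j = true).card + (C.filter fun j => u j ≠ v j).card := by
  refine le_trans (card_le_card ?_) (card_union_le _ _)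
  intro j hj
  simp only [mem_filter, mem_union] at *
  by_cases h : v j = true
  · exact Or.inl ⟨hj.1, h⟩
  · exact Or.inr ⟨hj.1, by simp [hj.2, h]⟩

lemma tri_filter {ι : Type*} [DecidableEq ι] (C : Finset ι) (u v w : ι → Bool) :
    (C.filter fun j => u j ≠ w j).card ≤
      (C.filter fun j => u j ≠ v j).card + (C.filter fun j => v j ≠ w j).card := by
  refine le_trans (card_le_card ?_) (card_union_le _ _)
  intro j hj
  simp only [mem_filter, mem_union] at *
  by_cases h : u j = v j
  · exact Or.inr ⟨hj.1, h ▸ hj.2⟩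
  · exact Or.inl ⟨hj.1, h⟩

/-- `qval`: number of no-star positions where `y` differs from both `w` and `s i`. -/
def qval {n m : ℕ} (s : Fin n → Fin m → Bool) (w : Fin m → Bool)
    (X : Finset (Fin m → Bool)) (y : Fin m → Bool) (i : Fin n) : ℕ :=
  (((starSet X)ᶜ).filter fun j => y j ≠ w j ∧ y j ≠ s i j).card

/-- Positions where all members of `X` differ from `w`. -/
def Tset {m : ℕ} (w : Fin m → Bool) (X : Finset (Fin m → Bool)) : Finset (Fin m) :=
  Finset.univ.filter fun j => ∀ y ∈ X, y j ≠ w j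

lemma greedy {n m : ℕ} (s : Fin n → Fin m → Bool) (w : Fin m → Bool) (OPT R : ℕ)
    (hR1 : 1 ≤ R) :
    ∀ fuel (X : Finset (Fin m → Bool)), X.Nonempty → X ⊆ Finset.image s Finset.univ →
      n ≤ X.card + fuel →
      R * (Tset w X).card + X.card * (OPT + 1) ≤ R * OPT + (OPT + 1) →
      ∃ X', X ⊆ X' ∧ X' ⊆ Finset.image s Finset.univ ∧ X'.card ≤ R ∧
        ∀ i, ∃ y ∈ X', R * qval s w X' y i ≤ OPT := by
  intro fuel
  induction fuel with
  | zero =>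
    intro X hne hsub hfuel hinv
    refine ⟨X, subset_rfl, hsub, ?_, ?_⟩
    · by_contra hc
      push_neg at hc
      have h1 : R + 1 ≤ X.card := hc
      have := Nat.mul_le_mul_right (OPT + 1) h1
      nlinarith
    · intro i
      have hmem : s i ∈ X := by
        by_contra hm
        have h1 : X.card + 1 ≤ n := by
          have h2 : insert (s i) X ⊆ Finset.image s Finset.univ :=
            insert_subset (mem_image_of_mem s (mem_univ i)) hsub
          have h3 := card_le_card h2
          rw [card_insert_of_notMem hm] at h3
          calc X.card + 1 ≤ (Finset.image s Finset.univ).card := h3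
            _ ≤ (Finset.univ : Finset (Fin n)).card := card_image_le
            _ = n := by simp
        omega
      exact ⟨s i, hmem, by simp [qval]⟩
  | succ f ih =>
    intro X hne hsub hfuel hinv
    by_cases hgood : ∀ i, ∃ y ∈ X, R * qval s w X y i ≤ OPT
    · refine ⟨X, subset_rfl, hsub, ?_, hgood⟩
      by_contra hc
      push_neg at hc
      have h1 : R + 1 ≤ X.card := hc
      have := Nat.mul_le_mul_right (OPT + 1) h1
      nlinarith
    · push_neg at hgood
      obtain ⟨i, hi⟩ := hgood
      have hsi : s i ∉ X := by
        intro hmem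
        have := hi (s i) hmem
        simp [qval] at this
      obtain ⟨y₀, hy₀⟩ := hne
      set Q : Finset (Fin m) :=
        ((starSet X)ᶜ).filter (fun j => y₀ j ≠ w j ∧ y₀ j ≠ s i j) with hQdef
      have hQ : OPT < R * Q.card := hi y₀ hy₀
      have hQT : Q ⊆ Tset w X := by
        intro j hj
        simp only [hQdef, mem_filter, mem_compl] at hj
        simp only [Tset, mem_filter, mem_univ, true_and]
        intro y hy
        rw [agree_of_notMem_starSet hj.1 hy hy₀]
        exact hj.2.1
      have hsub' : Tset w (insert (s i) X) ⊆ Tset w X \ Q := by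
        intro j hj
        simp only [Tset, mem_filter, mem_univ, true_and, mem_insert] at hj
        have hsij : s i j ≠ w j := hj (s i) (Or.inl rfl)
        rw [mem_sdiff]
        constructor
        · simp only [Tset, mem_filter, mem_univ, true_and]
          exact fun y hy => hj y (Or.inr hy)
        · intro hjQ
          simp only [hQdef, mem_filter] at hjQ
          have h1 : s i j = w j := by
            rcases hjQ.2 with ⟨ha, hb⟩
            cases hw : w j <;> cases hs : s i j <;> cases hyv : y₀ j <;> simp_all
          exact hsij h1
      have hcard : (Tset w (insert (s i) X)).card + Q.card ≤ (Tset w X).card := by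
        have h1 : (Tset w (insert (s i) X)).card ≤ ((Tset w X) \ Q).card :=
          card_le_card hsub'
        have h2 := card_sdiff_add_card_eq_card hQT
        omega
      have hinv' : R * (Tset w (insert (s i) X)).card +
          (insert (s i) X).card * (OPT + 1) ≤ R * OPT + (OPT + 1) := by
        rw [card_insert_of_notMem hsi]
        have h3 : R * ((Tset w (insert (s i) X)).card + Q.card) ≤ R * (Tset w X).card :=
          Nat.mul_le_mul_left R hcard
        nlinarith
      obtain ⟨X', hX1, hX2, hX3, hX4⟩ := ih (insert (s i) X) (insert_nonempty _ _)
        (insert_subset (mem_image_of_mem s (mem_univ i)) hsub)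
        (by rw [card_insert_of_notMem hsi]; omega) hinv'
      exact ⟨X', (subset_insert _ _).trans hX1, hX2, hX3, hX4⟩

/-- For every `R` with `1 ≤ R ≤ n` there exist `X ⊆ S` with `|X| = R` and a
string `x` with exactly `k` ones whose no-star part is a `k''`-completion of the
no-star part of `p(X)` (where `k''` is the number of ones of `x` on no-star
positions) and such that `max_i d(x, s_i) ≤ (1 + 2/R)·OPT`. -/
theorem exists_good_committee {n m k : ℕ} (hkm : k ≤ m) (hn : 0 < n)
    (s : Fin n → Fin m → Bool) (hinj : Function.Injective s)
    (OPT : ℕ) (sOPT : Fin m → Bool)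
    (hk : onesCount sOPT = k)
    (hOPT : maxDist s sOPT = OPT)
    (hmin : ∀ x : Fin m → Bool, onesCount x = k → OPT ≤ maxDist s x)
    (R : ℕ) (hR1 : 1 ≤ R) (hRn : R ≤ n) :
    ∃ X : Finset (Fin m → Bool), X ⊆ Finset.image s Finset.univ ∧ X.card = R ∧
      ∃ x : Fin m → Bool, onesCount x = k ∧
        ((((starSet X)ᶜ).filter fun j => x j ≠ pOne X j).card
            = (((((starSet X)ᶜ).filter fun j => x j = true).card : ℤ)
                - ((((starSet X)ᶜ).filter fun j => pOne X j = true).card : ℤ)).natAbs) ∧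
        (maxDist s x : ℝ) ≤ (1 + 2 / (R : ℝ)) * OPT := by
  have hd : ∀ i, hammingDist sOPT (s i) ≤ OPT := by
    intro i
    have h1 := Finset.le_sup (f := fun i => hammingDist sOPT (s i)) (mem_univ i)
    rw [← hOPT]
    exact h1
  set i₀ : Fin n := ⟨0, hn⟩ with hi₀
  -- base invariant
  have hbase : R * (Tset sOPT ({s i₀} : Finset (Fin m → Bool))).card +
      ({s i₀} : Finset (Fin m → Bool)).card * (OPT + 1) ≤ R * OPT + (OPT + 1) := by
    have h1 : (Tset sOPT ({s i₀} : Finset (Fin m → Bool))).card ≤ OPT := by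
      have he : Tset sOPT ({s i₀} : Finset (Fin m → Bool)) =
          Finset.univ.filter fun j => s i₀ j ≠ sOPT j := by
        simp [Tset]
      rw [he]
      have h2 : (Finset.univ.filter fun j => s i₀ j ≠ sOPT j).card
          = hammingDist (s i₀) sOPT := rfl
      rw [h2, hammingDist_comm]
      exact hd i₀
    have := Nat.mul_le_mul_left R h1
    simp only [card_singleton]
    omega
  obtain ⟨X₁, hX01, hX1sub, hX1card, hX1good⟩ :=
    greedy s sOPT OPT R hR1 n {s i₀} (singleton_nonempty _)
      (by simp) (by simp) hbase
  -- pad to size R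
  have himg : (Finset.image s Finset.univ).card = n := by
    rw [card_image_of_injective _ hinj, card_univ, Fintype.card_fin]
  obtain ⟨X, hX1X, hXsub, hXcard⟩ :=
    exists_subsuperset_card_eq hX1sub hX1card (by omega)
  have hgood : ∀ i, ∃ y ∈ X, R * qval s sOPT X y i ≤ OPT := by
    intro i
    obtain ⟨y, hy, hq⟩ := hX1good i
    refine ⟨y, hX1X hy, le_trans (Nat.mul_le_mul_left R ?_) hq⟩
    exact card_le_card (filter_subset_filter _ (compl_subset_compl.mpr (starSet_mono hX1X)))
  -- construction of x
  set B := starSet X with hB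
  set p := pOne X with hp
  set a := (B.filter fun j => sOPT j = true).card with ha
  set k'' := ((Bᶜ).filter fun j => sOPT j = true).card with hk''
  set c := ((Bᶜ).filter fun j => p j = true).card with hc
  have hak : a + k'' = k := by
    rw [← hk, onesCount, card_filter_split B]
  have hP : ((Bᶜ).filter fun j => p j = true).card +
      ((Bᶜ).filter fun j => ¬ p j = true).card = (Bᶜ).card :=
    card_filter_add_card_filter_not _
  have hk''le : k'' ≤ (Bᶜ).card := card_le_card (filter_subset _ _)
  obtain ⟨x, hxB, hones, hdiff⟩ :
      ∃ x : Fin m → Bool, (∀ j ∈ B, x j = sOPT j) ∧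
        ((Bᶜ).filter fun j => x j = true).card = k'' ∧
        ((Bᶜ).filter fun j => x j ≠ p j).card = ((k'' : ℤ) - (c : ℤ)).natAbs := by
    rcases le_or_gt c k'' with hck | hck
    · obtain ⟨E, hE, hEcard⟩ := exists_subset_card_eq
        (s := (Bᶜ).filter fun j => ¬ p j = true) (n := k'' - c) (by omega)
      have hEprop : ∀ j ∈ E, j ∉ B ∧ ¬ p j = true := by
        intro j hj
        have := hE hj
        simp only [mem_filter, mem_compl] at this
        exact this
      refine ⟨fun j => if j ∈ B then sOPT j else if j ∈ E then true else p j, ?_, ?_, ?_⟩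
      · intro j hj
        simp [hj]
      · have hset : ((Bᶜ).filter fun j =>
            (if j ∈ B then sOPT j else if j ∈ E then true else p j) = true)
            = E ∪ ((Bᶜ).filter fun j => p j = true) := by
          ext j
          simp only [mem_filter, mem_union, mem_compl]
          constructor
          · rintro ⟨hjB, hx⟩
            rw [if_neg hjB] at hx
            by_cases hjE : j ∈ E
            · exact Or.inl hjE
            · rw [if_neg hjE] at hx
              exact Or.inr ⟨hjB, hx⟩
          · intro h
            rcases h with hjE | ⟨hjB, hp1⟩
            · obtain ⟨hjB, _⟩ := hEprop j hjE
              exact ⟨hjB, by rw [if_neg hjB, if_pos hjE]⟩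
            · refine ⟨hjB, ?_⟩
              rw [if_neg hjB]
              by_cases hjE : j ∈ E
              · rw [if_pos hjE]
              · rw [if_neg hjE]; exact hp1
        rw [hset, card_union_of_disjoint, hEcard]
        · omega
        · rw [disjoint_left]
          intro j hjE hj1
          have := (hEprop j hjE).2
          simp only [mem_filter] at hj1
          exact this hj1.2
      · have hset2 : ((Bᶜ).filter fun j =>
            (if j ∈ B then sOPT j else if j ∈ E then true else p j) ≠ p j) = E := by
          ext j
          simp only [mem_filter, mem_compl]
          constructor
          · rintro ⟨hjB, hx⟩
            rw [if_neg hjB] at hx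
            by_cases hjE : j ∈ E
            · exact hjE
            · rw [if_neg hjE] at hx
              exact absurd rfl hx
          · intro hjE
            obtain ⟨hjB, hpj⟩ := hEprop j hjE
            refine ⟨hjB, ?_⟩
            rw [if_neg hjB, if_pos hjE]
            simp only [Bool.not_eq_true] at hpj
            rw [hpj]
            simp
        rw [hset2, hEcard]
        omega
    · obtain ⟨F, hF, hFcard⟩ := exists_subset_card_eq
        (s := (Bᶜ).filter fun j => p j = true) (n := c - k'') (by omega)
      have hFprop : ∀ j ∈ F, j ∉ B ∧ p j = true := by
        intro j hj
        have := hF hj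
        simp only [mem_filter, mem_compl] at this
        exact this
      refine ⟨fun j => if j ∈ B then sOPT j else if j ∈ F then false else p j, ?_, ?_, ?_⟩
      · intro j hj
        simp [hj]
      · have hset : ((Bᶜ).filter fun j =>
            (if j ∈ B then sOPT j else if j ∈ F then false else p j) = true)
            = ((Bᶜ).filter fun j => p j = true) \ F := by
          ext j
          simp only [mem_filter, mem_sdiff, mem_compl]
          constructor
          · rintro ⟨hjB, hx⟩
            rw [if_neg hjB] at hx
            by_cases hjF : j ∈ F
            · rw [if_pos hjF] at hx; simp at hx
            · rw [if_neg hjF] at hx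
              exact ⟨⟨hjB, hx⟩, hjF⟩
          · rintro ⟨⟨hjB, hp1⟩, hjF⟩
            refine ⟨hjB, ?_⟩
            rw [if_neg hjB, if_neg hjF]
            exact hp1
        rw [hset, card_sdiff_of_subset hF, hFcard]
        omega
      · have hset2 : ((Bᶜ).filter fun j =>
            (if j ∈ B then sOPT j else if j ∈ F then false else p j) ≠ p j) = F := by
          ext j
          simp only [mem_filter, mem_compl]
          constructor
          · rintro ⟨hjB, hx⟩
            rw [if_neg hjB] at hx
            by_cases hjF : j ∈ F
            · exact hjF
            · rw [if_neg hjF] at hx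
              exact absurd rfl hx
          · intro hjF
            obtain ⟨hjB, hpj⟩ := hFprop j hjF
            refine ⟨hjB, ?_⟩
            rw [if_neg hjB, if_pos hjF, hpj]
            simp
        rw [hset2, hFcard]
        omega
  have honesx : onesCount x = k := by
    rw [onesCount, card_filter_split B]
    have h1 : (B.filter fun j => x j = true) = B.filter fun j => sOPT j = true :=
      filter_congr fun j hj => by rw [hxB j hj]
    rw [h1, hones, ← ha, hak]
  -- distance bound in ℕ
  have hdist : ∀ i : Fin n, ∃ q : ℕ, R * q ≤ OPT ∧
      hammingDist x (s i) ≤ OPT + 2 * q := by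
    intro i
    obtain ⟨y, hyX, hq⟩ := hgood i
    refine ⟨qval s sOPT X y i, hq, ?_⟩
    have hpy : ∀ j ∈ (Bᶜ : Finset (Fin m)), p j = y j := fun j hj =>
      pOne_eq_on (mem_compl.mp hj) hyX
    have A1 : hammingDist x (s i) = (B.filter fun j => x j ≠ s i j).card +
        ((Bᶜ).filter fun j => x j ≠ s i j).card := card_filter_split B _
    have A2 : (B.filter fun j => x j ≠ s i j) = B.filter fun j => sOPT j ≠ s i j :=
      filter_congr fun j hj => by rw [hxB j hj]
    rw [A2] at A1
    have A3 := tri_filter (Bᶜ) x p (s i)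
    have hd1 := card_filter_le_add (Bᶜ) sOPT p
    have hd2 := card_filter_le_add (Bᶜ) p sOPT
    have hd2' : ((Bᶜ).filter fun j => p j ≠ sOPT j).card
        = ((Bᶜ).filter fun j => sOPT j ≠ p j).card := by
      congr 1
      exact filter_congr fun j _ => by simp [ne_comm]
    rw [hd2'] at hd2
    have A4 : ((Bᶜ).filter fun j => x j ≠ p j).card
        ≤ ((Bᶜ).filter fun j => sOPT j ≠ p j).card := by
      rw [hdiff]
      omega
    have A4' : ((Bᶜ).filter fun j => sOPT j ≠ p j)
        = (Bᶜ).filter fun j => sOPT j ≠ y j :=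
      filter_congr fun j hj => by rw [hpy j hj]
    have A5 : ((Bᶜ).filter fun j => p j ≠ s i j)
        = (Bᶜ).filter fun j => y j ≠ s i j :=
      filter_congr fun j hj => by rw [hpy j hj]
    have A6 : hammingDist sOPT (s i) = (B.filter fun j => sOPT j ≠ s i j).card +
        ((Bᶜ).filter fun j => sOPT j ≠ s i j).card := card_filter_split B _
    have A7 : ((Bᶜ).filter fun j => y j ≠ s i j).card +
        ((Bᶜ).filter fun j => sOPT j ≠ y j).card
        ≤ ((Bᶜ).filter fun j => sOPT j ≠ s i j).card + 2 * qval s sOPT X y i := by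
      have hq' : qval s sOPT X y i
          = ((Bᶜ).filter fun j => y j ≠ sOPT j ∧ y j ≠ s i j).card := rfl
      rw [hq', card_filter, card_filter, card_filter, card_filter, Finset.mul_sum,
        ← Finset.sum_add_distrib, ← Finset.sum_add_distrib]
      refine Finset.sum_le_sum ?_
      intro j _
      cases h1 : y j <;> cases h2 : sOPT j <;> cases h3 : s i j <;> simp
    have A8 := hd i
    rw [A4'] at A4
    rw [A5] at A3
    omega
  -- conclusion
  refine ⟨X, hXsub, hXcard, x, honesx, ?_, ?_⟩
  · rw [hdiff, hones]
  · have hne : (Finset.univ : Finset (Fin n)).Nonempty := ⟨i₀, mem_univ _⟩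
    obtain ⟨i, _, hieq⟩ := Finset.exists_mem_eq_sup (Finset.univ : Finset (Fin n)) hne
      (fun i => hammingDist x (s i))
    obtain ⟨q, hq1, hq2⟩ := hdist i
    rw [maxDist, hieq]
    have hRpos : (0 : ℝ) < R := by
      have : (0 : ℕ) < R := hR1
      exact_mod_cast this
    have hq' : (q : ℝ) ≤ OPT / R := by
      rw [le_div_iff₀ hRpos, mul_comm]
      exact_mod_cast hq1
    have h2 : (hammingDist x (s i) : ℝ) ≤ OPT + 2 * q := by exact_mod_cast hq2
    calc (hammingDist x (s i) : ℝ) ≤ OPT + 2 * q := h2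
      _ ≤ OPT + 2 * (OPT / R) := by linarith
      _ = (1 + 2 / R) * OPT := by field_simp
end
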